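/- arXiv:1202.5649 — 3 statements merged into one kernel-verified Lean document; each statement's English description precedes it below -/
import Mathlib

section
/- Let G be a divisible torsion-free abelian group and X ⊆ G. Then X is convex if and only if for every positive integer n, the set n·X = {n·x : x ∈ X} equals the n-fold sumset Σ_n X = {x₁ + ⋯ + x_n : x₁,…,x_n ∈ X}. -/
def IsConvexSet {G : Type*} [AddCommGroup G] (C : Set G) : Prop :=
  ∀ a ∈ C, ∀ b ∈ C, ∀ m n : ℕ, m + n ≠ 0 →
    ∀ x : G, (m + n) • x = m • a + n • b → x ∈ C

/-- The n-fold sumset of X. -/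
def sumsetN {G : Type*} [AddCommGroup G] (n : ℕ) (X : Set G) : Set G :=
  {y : G | ∃ a : Fin n → G, (∀ i, a i ∈ X) ∧ y = ∑ i, a i}

lemma avg_mem {G : Type*} [AddCommGroup G]
    (hdiv : ∀ (g : G) (n : ℕ), 0 < n → ∃ h : G, n • h = g)
    (htf : ∀ (x : G) (n : ℕ), 0 < n → n • x = 0 → x = 0)
    {X : Set G} (hc : IsConvexSet X) :
    ∀ n : ℕ, 0 < n → ∀ a : Fin n → G, (∀ i, a i ∈ X) →
      ∀ x : G, n • x = ∑ i, a i → x ∈ X := by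
  intro n
  induction n with
  | zero => intro h; exact absurd h (lt_irrefl 0)
  | succ n ih =>
    intro _ a ha x hx
    rcases Nat.eq_zero_or_pos n with rfl | hn
    · have : x = a 0 := by
        have h1 : (1 : ℕ) • x = a 0 := by simpa [Fin.sum_univ_one] using hx
        simpa using h1
      exact this ▸ ha 0
    · obtain ⟨y, hy⟩ := hdiv (∑ i : Fin n, a i.castSucc) n hn
      have hyX : y ∈ X := ih hn (fun i => a i.castSucc) (fun i => ha _) y hy
      apply hc y hyX (a (Fin.last n)) (ha _) n 1 (by omega) x
      rw [Fin.sum_univ_castSucc] at hx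
      simpa [hy] using hx

/-- In a divisible torsion-free abelian group, X is convex iff
n•X = Σ_n X for every positive n. -/
theorem stmt_5 {G : Type*} [AddCommGroup G]
    (hdiv : ∀ (g : G) (n : ℕ), 0 < n → ∃ h : G, n • h = g)
    (htf : ∀ (x : G) (n : ℕ), 0 < n → n • x = 0 → x = 0)
    (X : Set G) :
    IsConvexSet X ↔ ∀ n : ℕ, 0 < n → (fun x : G => n • x) '' X = sumsetN n X := by
  constructor
  · intro hc n hn
    ext y
    constructor
    · rintro ⟨x, hx, rfl⟩
      exact ⟨fun _ => x, fun _ => hx, by simp⟩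
    · rintro ⟨a, ha, rfl⟩
      obtain ⟨x, hx⟩ := hdiv (∑ i, a i) n hn
      exact ⟨x, avg_mem hdiv htf hc n hn a ha x hx, hx⟩
  · intro h a haX b hbX m n hmn x hx
    have hpos : 0 < m + n := Nat.pos_of_ne_zero hmn
    have hsum : m • a + n • b ∈ sumsetN (m + n) X := by
      refine ⟨Fin.addCases (fun _ => a) (fun _ => b), ?_, ?_⟩
      · intro i
        refine Fin.addCases (fun i => ?_) (fun i => ?_) i <;> simp [haX, hbX]
      · rw [Fin.sum_univ_add]
        simp
    rw [← h (m + n) hpos] at hsum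
    obtain ⟨y, hyX, hy⟩ := hsum
    simp only at hy
    have : x = y := by
      have h0 : (m + n) • (x - y) = 0 := by
        rw [smul_sub, hx, hy]; abel
      exact sub_eq_zero.mp (htf _ _ hpos h0)
    exact this ▸ hyX
end

section
/- Every subgroup of ℝ^d that is discrete (in the subspace topology) is a free abelian group of rank at most d. -/
open Submodule Module

/-- A discrete subgroup of ℝ^d is free abelian of rank at most d. -/
theorem stmt_11 (d : ℕ) (Γ : AddSubgroup (Fin d → ℝ))
    (hdisc : DiscreteTopology Γ) :
    ∃ s : ℕ, s ≤ d ∧ Nonempty (Γ ≃+ (Fin s → ℤ)) := by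
  set E := Fin d → ℝ
  set L : Submodule ℤ E := AddSubgroup.toIntSubmodule Γ with hL
  have hdL : DiscreteTopology L := hdisc
  set V : Submodule ℝ E := span ℝ (L : Set E) with hV
  set L₀ : Submodule ℤ V := ZLattice.comap ℝ L V.subtype with hL₀
  have hdL₀ : DiscreteTopology L₀ :=
    ZLattice.comap_discreteTopology ℝ L continuous_subtype_val Subtype.coe_injective
  have hZL : IsZLattice ℝ L₀ := ⟨by
    rw [← (Submodule.map_injective_of_injective (injective_subtype V)).eq_iff,
      Submodule.map_span, Submodule.map_top, range_subtype]
    congr 1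
    ext x
    simp only [hL₀, ZLattice.coe_comap, Set.mem_image, Set.mem_preimage]
    constructor
    · rintro ⟨y, hy, rfl⟩; exact hy
    · intro hx; exact ⟨⟨x, subset_span hx⟩, hx, rfl⟩⟩
  have hfree : Module.Free ℤ L₀ := ZLattice.module_free ℝ L₀
  have hfin : Module.Finite ℤ L₀ := ZLattice.module_finite ℝ L₀
  refine ⟨finrank ℤ L₀, ?_, ?_⟩
  · rw [ZLattice.rank ℝ L₀]
    exact (Submodule.finrank_le V).trans (by simp [E])
  · -- Γ ≃+ L₀
    have e₁ : Γ ≃+ L₀ :=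
      { toFun := fun x => ⟨⟨(x : E), subset_span x.2⟩, x.2⟩
        invFun := fun y => ⟨(y : V), y.2⟩
        left_inv := fun x => rfl
        right_inv := fun y => rfl
        map_add' := fun x y => rfl }
    let b := Module.Free.chooseBasis ℤ L₀
    have hcard : Fintype.card (Module.Free.ChooseBasisIndex ℤ L₀) = finrank ℤ L₀ :=
      (finrank_eq_card_chooseBasisIndex ℤ L₀).symm
    let e₂ : L₀ ≃ₗ[ℤ] (Fin (finrank ℤ L₀) → ℤ) :=
      (b.reindex (Fintype.equivFinOfCardEq hcard)).equivFun
    exact ⟨e₁.trans e₂.toAddEquiv⟩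
end

section
/- Let G and H be abelian groups, π : G → H a surjective homomorphism whose kernel is divisible. If C ⊆ H is convex, then π⁻¹(C) ⊆ G is convex. -/
/-- If π : G → H is surjective with divisible kernel and C ⊆ H is convex,
then π⁻¹(C) is convex. -/
theorem stmt_14 {G H : Type*} [AddCommGroup G] [AddCommGroup H]
    (π : G →+ H) (hsurj : Function.Surjective π)
    (hker : ∀ z ∈ π.ker, ∀ n : ℕ, 0 < n → ∃ w ∈ π.ker, n • w = z)
    (C : Set H) (hC : IsConvexSet C) :
    IsConvexSet (π ⁻¹' C) := by
  intro a ha b hb m n hmn x hx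
  refine hC (π a) ha (π b) hb m n hmn (π x) ?_
  have := congrArg π hx
  simpa [map_nsmul] using this
end
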